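/- arXiv:math/0505521 — 5 statements merged into one kernel-verified Lean document; each statement's English description precedes it below -/
import Mathlib

section
/- For any positive integer n, any squarefree positive integer P, and any integer ℓ ≥ 0, the truncated Möbius sums satisfy: ∑_{d ∣ gcd(n,P), ν(d) ≤ 2ℓ+1} μ(d) ≤ ∑_{d ∣ gcd(n,P)} μ(d) ≤ ∑_{d ∣ gcd(n,P), ν(d) ≤ 2ℓ} μ(d) (Brun's Pure Sieve inequality). -/
/-!
For squarefree `m`, `d ↦ d.primeFactors` is a bijection from the divisors of `m` onto the subsets
of its set of `k` prime factors, and `μ d = (-1) ^ #d.primeFactors`. The sums therefore become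
truncated alternating binomial sums `∑_{j ≤ t} (-1)^j C(k, j) = (-1)^t C(k - 1, t)` (for `k ≥ 1`),
whose sign alternates with `t`, while the untruncated sum vanishes.
-/

open Finset ArithmeticFunction

open scoped ArithmeticFunction.Moebius

namespace Finset

variable {β : Type*}

theorem sum_powerset_filter_card_le_apply_card {α : Type*} [AddCommMonoid α] (f : ℕ → α)
    (x : Finset β) (t : ℕ) :
    ∑ s ∈ x.powerset with #s ≤ t, f #s = ∑ m ∈ range (t + 1), (#x).choose m • f m := by
  rw [← sum_fiberwise_of_maps_to (g := card) (t := range (t + 1))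
    fun s hs => mem_range_succ_iff.2 (mem_filter.1 hs).2]
  refine sum_congr rfl fun m hm => ?_
  have hfiber : (x.powerset.filter (#· ≤ t)).filter (#· = m) = powersetCard m x := by
    rw [powersetCard_eq_filter, filter_filter]
    exact filter_congr fun s _ => ⟨And.right, fun h => ⟨h ▸ mem_range_succ_iff.1 hm, h⟩⟩
  rw [hfiber, ← card_powersetCard, ← sum_const]
  exact sum_congr rfl fun s hs => by rw [(mem_powersetCard.1 hs).2]

theorem sum_powerset_filter_card_le_neg_one_pow {x : Finset β} (hx : x.Nonempty) (t : ℕ) :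
    ∑ s ∈ x.powerset with #s ≤ t, (-1 : ℤ) ^ #s = (-1) ^ t * (#x - 1).choose t := by
  obtain ⟨k, hk⟩ : ∃ k, #x = k + 1 := ⟨#x - 1, by have := hx.card_pos; omega⟩
  simp_rw [sum_powerset_filter_card_le_apply_card, hk, nsmul_eq_mul, mul_comm,
    Nat.add_sub_cancel]
  exact Int.alternating_sum_range_choose_eq_choose

theorem sum_powerset_neg_one_pow_card_bonferroni (x : Finset β) (ℓ : ℕ) :
    ∑ s ∈ x.powerset with #s ≤ 2 * ℓ + 1, (-1 : ℤ) ^ #s ≤ ∑ s ∈ x.powerset, (-1 : ℤ) ^ #s ∧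
      ∑ s ∈ x.powerset, (-1 : ℤ) ^ #s ≤ ∑ s ∈ x.powerset with #s ≤ 2 * ℓ, (-1 : ℤ) ^ #s := by
  rcases x.eq_empty_or_nonempty with rfl | hx
  · simp [filter_singleton]
  rw [sum_powerset_neg_one_pow_card_of_nonempty hx, sum_powerset_filter_card_le_neg_one_pow hx,
    sum_powerset_filter_card_le_neg_one_pow hx, pow_succ, pow_mul, neg_one_sq, one_pow]
  constructor <;> simp

end Finset

namespace Nat

theorem sum_divisors_eq_sum_powerset_primeFactors {α : Type*} [AddCommMonoid α] {n : ℕ}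
    (hn : Squarefree n) (g : Finset ℕ → α) :
    ∑ d ∈ n.divisors, g d.primeFactors = ∑ s ∈ n.primeFactors.powerset, g s := by
  refine sum_nbij' primeFactors (fun s => ∏ p ∈ s, p) (fun d hd => ?_) (fun s hs => ?_)
    (fun d hd => ?_) (fun s hs => ?_) fun _ _ => rfl
  · exact mem_powerset.2 (primeFactors_mono (dvd_of_mem_divisors hd) hn.ne_zero)
  · exact mem_divisors.2 ⟨(prod_dvd_prod_of_subset _ _ _ (mem_powerset.1 hs)).trans
      (prod_primeFactors_dvd n), hn.ne_zero⟩
  · exact prod_primeFactors_of_squarefree (hn.squarefree_of_dvd (dvd_of_mem_divisors hd))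
  · exact primeFactors_prod fun p hp => prime_of_mem_primeFactors (mem_powerset.1 hs hp)

end Nat

namespace ArithmeticFunction

theorem moebius_apply_eq_neg_one_pow_card_primeFactors {n : ℕ} (hn : Squarefree n) :
    μ n = (-1) ^ #n.primeFactors := by
  rw [moebius_apply_of_squarefree hn,
    ← (cardDistinctFactors_eq_cardFactors_iff_squarefree hn.ne_zero).2 hn,
    cardDistinctFactors_apply, ← List.card_toFinset, Nat.toFinset_factors]

theorem sum_divisors_filter_moebius_eq_sum_powerset {n : ℕ} (hn : Squarefree n)
    (q : ℕ → Prop) [DecidablePred q] :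
    ∑ d ∈ n.divisors with q #d.primeFactors, μ d =
      ∑ s ∈ n.primeFactors.powerset with q #s, (-1 : ℤ) ^ #s := by
  rw [sum_filter, sum_filter, ← Nat.sum_divisors_eq_sum_powerset_primeFactors hn]
  exact sum_congr rfl fun d hd => by
    rw [moebius_apply_eq_neg_one_pow_card_primeFactors
      (hn.squarefree_of_dvd (Nat.dvd_of_mem_divisors hd))]

end ArithmeticFunction

theorem brun_pure_sieve_general (n P ℓ : ℕ) (hP : Squarefree P) :
    (∑ d ∈ (Nat.gcd n P).divisors.filter (fun d => d.primeFactors.card ≤ 2 * ℓ + 1),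
        ArithmeticFunction.moebius d ≤
      ∑ d ∈ (Nat.gcd n P).divisors, ArithmeticFunction.moebius d) ∧
    (∑ d ∈ (Nat.gcd n P).divisors, ArithmeticFunction.moebius d ≤
      ∑ d ∈ (Nat.gcd n P).divisors.filter (fun d => d.primeFactors.card ≤ 2 * ℓ),
        ArithmeticFunction.moebius d) := by
  have hm : Squarefree (Nat.gcd n P) := hP.squarefree_of_dvd (Nat.gcd_dvd_right n P)
  have hfull : ∑ d ∈ (Nat.gcd n P).divisors, μ d =
      ∑ s ∈ (Nat.gcd n P).primeFactors.powerset, (-1 : ℤ) ^ #s := by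
    simpa using sum_divisors_filter_moebius_eq_sum_powerset hm (fun _ => True)
  rw [hfull, sum_divisors_filter_moebius_eq_sum_powerset hm (· ≤ 2 * ℓ + 1),
    sum_divisors_filter_moebius_eq_sum_powerset hm (· ≤ 2 * ℓ)]
  exact sum_powerset_neg_one_pow_card_bonferroni _ ℓ

theorem brun_pure_sieve (n P ℓ : ℕ) (hn : 0 < n) (hP : Squarefree P) :
    (∑ d ∈ (Nat.gcd n P).divisors.filter (fun d => d.primeFactors.card ≤ 2 * ℓ + 1),
        ArithmeticFunction.moebius d ≤
      ∑ d ∈ (Nat.gcd n P).divisors, ArithmeticFunction.moebius d) ∧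
    (∑ d ∈ (Nat.gcd n P).divisors, ArithmeticFunction.moebius d ≤
      ∑ d ∈ (Nat.gcd n P).divisors.filter (fun d => d.primeFactors.card ≤ 2 * ℓ),
        ArithmeticFunction.moebius d) :=
  brun_pure_sieve_general n P ℓ hP
end

section
/- For each prime p let Ω(p) be a proper nonempty set of residue classes mod p, and let U(θ; p, a) = ∑_{M ≤ n < M+N, n ≡ a (mod p)} ϖ(n) e(nθ), where ϖ is the characteristic function of integers avoiding Ω(p) for all primes p < z. Then for any prime p < z and any real θ, |U(θ)|² · |Ω(p)|/(p − |Ω(p)|) ≤ ∑_{a=1}^{p−1} |U(θ + a/p)|², where U(θ) = ∑_{M ≤ n < M+N} ϖ(n) e(nθ). -/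
/-!
Split the sum by residue classes mod `N`: writing `U_b(θ)` for the part of `U(θ)` supported on
`n ≡ b`, one has `U(θ + a/N) = ∑_b U_b(θ) e(ab/N)`, so by Parseval for the additive characters
of `ZMod N` the sum of `|U(θ + a/N)|²` over all `a mod N` equals `N ∑_b |U_b(θ)|²`. The weights
vanish on the classes in `Ω`, so `U(θ) = ∑_{b ∉ Ω} U_b(θ)` and Cauchy–Schwarz gives
`|U(θ)|² ≤ (N - |Ω|) ∑_b |U_b(θ)|²`. Separating the term `a = 0` and rearranging gives the claim.
-/

open Finset Complex
open scoped ComplexConjugate Real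

namespace AddChar

variable {R : Type*} [CommRing R] [Fintype R] [DecidableEq R]

theorem IsPrimitive.sum_sq_norm_sum_mul_apply {ψ : AddChar R ℂ} (hψ : ψ.IsPrimitive)
    (V : R → ℂ) :
    ∑ a, ‖∑ b, V b * ψ (a * b)‖ ^ 2 = Fintype.card R * ∑ b, ‖V b‖ ^ 2 := by
  have orthogonality (b c : R) : ∑ a, ψ (a * b) * conj (ψ (a * c)) =
      if b = c then (Fintype.card R : ℂ) else 0 := by
    simp_rw [← map_neg_eq_conj, ← map_add_eq_mul, ← mul_neg, ← mul_add, ← sub_eq_add_neg,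
      sum_mulShift _ hψ, sub_eq_zero]
    push_cast; rfl
  apply Complex.ofReal_injective
  push_cast
  simp_rw [← Complex.mul_conj', map_sum, map_mul, sum_mul_sum, mul_sum]
  rw [sum_comm]
  refine sum_congr rfl fun b _ => ?_
  rw [sum_comm]
  calc _ = ∑ c, V b * conj (V c) * ∑ a, ψ (a * b) * conj (ψ (a * c)) := by
        simp_rw [mul_sum, mul_mul_mul_comm]
    _ = _ := by
        simp only [orthogonality, mul_ite, mul_zero, sum_ite_eq, mem_univ, if_true]
        ring

end AddChar

theorem ZMod.sum_range_natCast {M : Type*} [AddCommMonoid M] (N : ℕ) [NeZero N] (F : ZMod N → M) :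
    ∑ a ∈ range N, F a = ∑ a, F a := by
  refine sum_nbij' (fun a => (a : ZMod N)) ZMod.val ?_ ?_ ?_ ?_ ?_
  all_goals intros; simp_all [ZMod.val_lt, Nat.mod_eq_of_lt]

theorem sq_norm_sum_le_card_sub_mul_sum_sq_norm {ι E : Type*} [Fintype ι] [DecidableEq ι]
    [SeminormedAddCommGroup E] {s : Finset ι} {V : ι → E} (hV : ∀ i ∈ s, V i = 0) :
    ‖∑ i, V i‖ ^ 2 ≤ (Fintype.card ι - #s) * ∑ i, ‖V i‖ ^ 2 := by
  have hsum : ∑ i, V i = ∑ i ∈ sᶜ, V i :=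
    (sum_subset (subset_univ _) fun i _ hi => hV i (by simpa using hi)).symm
  calc ‖∑ i, V i‖ ^ 2 ≤ (∑ i ∈ sᶜ, ‖V i‖) ^ 2 := by
        rw [hsum]; gcongr; exact norm_sum_le _ _
    _ ≤ #sᶜ * ∑ i ∈ sᶜ, ‖V i‖ ^ 2 := sq_sum_le_card_mul_sum_sq
    _ ≤ (Fintype.card ι - #s) * ∑ i, ‖V i‖ ^ 2 := by
        rw [card_compl, Nat.cast_sub (card_le_univ s)]
        gcongr
        · exact sub_nonneg.2 (mod_cast card_le_univ s)
        · exact subset_univ _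

noncomputable def expSum (T : Finset ℤ) (g : ℤ → ℂ) (θ : ℝ) : ℂ :=
  ∑ n ∈ T, g n * Complex.exp (2 * π * I * n * θ)

theorem expSum_add_div (N : ℕ) [NeZero N] (T : Finset ℤ) (g : ℤ → ℂ) (θ : ℝ) (a : ℕ) :
    expSum T g (θ + a / N) = ∑ b : ZMod N,
      expSum {n ∈ T | (n : ZMod N) = b} g θ * ZMod.stdAddChar ((a : ZMod N) * b) := by
  simp_rw [expSum, sum_mul]
  rw [← sum_fiberwise T (fun n => (n : ZMod N))]
  refine sum_congr rfl fun b _ => sum_congr rfl fun n hn => ?_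
  rw [← (mem_filter.1 hn).2, show (a : ZMod N) * n = ((a * n : ℤ) : ZMod N) by push_cast; ring,
    ZMod.stdAddChar_coe, mul_assoc (g n), ← Complex.exp_add]
  push_cast
  ring_nf

theorem sq_norm_expSum_mul_le_sum_sq_norm_expSum_add_div {N : ℕ} {Ω : Finset (ZMod N)}
    (hΩ : #Ω < N) (T : Finset ℤ) {g : ℤ → ℂ} (hg : ∀ n : ℤ, (n : ZMod N) ∈ Ω → g n = 0)
    (θ : ℝ) :
    ‖expSum T g θ‖ ^ 2 * (#Ω / (N - #Ω)) ≤ ∑ a ∈ Ico 1 N, ‖expSum T g (θ + a / N)‖ ^ 2 := by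
  have hN : 0 < N := by omega
  have : NeZero N := ⟨hN.ne'⟩
  -- `V b` is the paper's `U(θ; N, b)`
  set V : ZMod N → ℂ := fun b => expSum {n ∈ T | (n : ZMod N) = b} g θ
  have parseval : ∑ a ∈ range N, ‖expSum T g (θ + a / N)‖ ^ 2 = N * ∑ b, ‖V b‖ ^ 2 := by
    simp_rw [expSum_add_div N]
    rw [ZMod.sum_range_natCast N fun a => ‖∑ b, V b * ZMod.stdAddChar (a * b)‖ ^ 2,
      (ZMod.isPrimitive_stdAddChar N).sum_sq_norm_sum_mul_apply, ZMod.card]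
  have hV : ∀ b ∈ Ω, V b = 0 := fun b hb => sum_eq_zero fun n hn => by
    rw [hg n ((mem_filter.1 hn).2 ▸ hb), zero_mul]
  have cauchy_schwarz : ‖expSum T g θ‖ ^ 2 ≤ (N - #Ω) * ∑ b, ‖V b‖ ^ 2 := by
    have hfibers : expSum T g θ = ∑ b, V b := (sum_fiberwise T _ _).symm
    rw [hfibers]
    simpa only [ZMod.card] using sq_norm_sum_le_card_sub_mul_sum_sq_norm hV
  rw [sum_range_eq_add_Ico _ hN] at parseval -- the term `a = 0` is `‖expSum T g θ‖ ^ 2`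
  have hgap : (0 : ℝ) < N - #Ω := sub_pos.2 (mod_cast hΩ)
  rw [mul_div_assoc', div_le_iff₀ hgap]
  simp only [CharP.cast_eq_zero, zero_div, add_zero] at parseval
  nlinarith [mul_le_mul_of_nonneg_left cauchy_schwarz (Nat.cast_nonneg N)]

open scoped Classical in
theorem linnik_farey_inequality (z : ℕ) (Ω : (p : ℕ) → Finset (ZMod p))
    (hΩ : ∀ p : ℕ, p.Prime → p < z → 0 < (Ω p).card ∧ (Ω p).card < p)
    (M : ℤ) (N : ℕ) (ϖ : ℤ → ℂ)
    (hϖ : ∀ n : ℤ, ϖ n =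
      if ∀ p : ℕ, p.Prime → p < z → (n : ZMod p) ∉ Ω p then 1 else 0)
    (U : ℝ → ℂ)
    (hU : ∀ θ : ℝ, U θ = ∑ n ∈ Finset.Ico M (M + N),
      ϖ n * Complex.exp (2 * Real.pi * Complex.I * n * θ))
    (p : ℕ) (hp : p.Prime) (hpz : p < z) (θ : ℝ) :
    ‖U θ‖ ^ 2 * (((Ω p).card : ℝ) / ((p : ℝ) - (Ω p).card)) ≤
      ∑ a ∈ Finset.Ico 1 p, ‖U (θ + (a : ℝ) / p)‖ ^ 2 := by
  have hϖ_vanishes : ∀ n : ℤ, (n : ZMod p) ∈ Ω p → ϖ n = 0 := fun n hn => by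
    rw [hϖ, if_neg fun hsifted => hsifted p hp hpz hn]
  rw [show U = expSum (Ico M (M + N)) ϖ from funext hU]
  exact sq_norm_expSum_mul_le_sum_sq_norm_expSum_add_div (hΩ p hp hpz).2 _ hϖ_vanishes θ
end

section
/- With |Ω(·)| multiplicative on squarefree integers and 0 < |Ω(p)| < p, for squarefree d₁, d₂ one has gcd(d₁,d₂)/|Ω(gcd(d₁,d₂))| = ∑_{f ∣ d₁, f ∣ d₂} (1/|Ω(f)|) ∏_{p ∣ f} (p − |Ω(p)|) (Möbius-type inversion identity). -/
/-!
Write `g = gcd d₁ d₂`, a squarefree number. Then `g / ω g = ∏_{p ∣ g} p / ω p`, and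
`p / ω p = 1 + (p - ω p) / ω p`. Expanding this product gives one term for each squarefree
divisor `f` of `g`, namely `∏_{p ∣ f} (p - ω p) / ω p = (1 / ω f) ∏_{p ∣ f} (p - ω p)`.
-/

open Finset

open ArithmeticFunction in
theorem Nat.sum_divisors_prod_primeFactors_of_squarefree {R : Type*} [CommSemiring R]
    (h : ℕ → R) {n : ℕ} (hn : Squarefree n) :
    ∑ d ∈ n.divisors, ∏ p ∈ d.primeFactors, h p = ∏ p ∈ n.primeFactors, (1 + h p) := by
  have key := IsMultiplicative.prodPrimeFactors_add_of_squarefree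
    isMultiplicative_zeta.natCast (IsMultiplicative.prodPrimeFactors h) hn
  rw [prodPrimeFactors_apply hn.ne_zero, coe_zeta_mul_apply] at key
  calc ∑ d ∈ n.divisors, ∏ p ∈ d.primeFactors, h p
      = ∑ d ∈ n.divisors, prodPrimeFactors h d :=
        sum_congr rfl fun d hd => (prodPrimeFactors_apply (pos_of_mem_divisors hd).ne').symm
    _ = _ := key.symm
    _ = _ := prod_congr rfl fun p hp => ?_
  have hp := prime_of_mem_primeFactors hp
  rw [ArithmeticFunction.add_apply, natCoe_apply, zeta_apply, if_neg hp.ne_zero, cast_one,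
    prodPrimeFactors_apply hp.ne_zero, hp.primeFactors, prod_singleton]

theorem omega_gcd_moebius_inversion_general (ω : ℕ → ℕ)
    (hmul : ∀ d : ℕ, Squarefree d → ω d = ∏ p ∈ d.primeFactors, ω p)
    (hp : ∀ p : ℕ, p.Prime → 0 < ω p ∧ ω p < p)
    (d₁ d₂ : ℕ) (h₁ : Squarefree d₁) :
    (Nat.gcd d₁ d₂ : ℚ) / (ω (Nat.gcd d₁ d₂) : ℚ) =
      ∑ f ∈ (Nat.gcd d₁ d₂).divisors,
        (1 / (ω f : ℚ)) * ∏ p ∈ f.primeFactors, ((p : ℚ) - (ω p : ℚ)) := by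
  set g := Nat.gcd d₁ d₂
  have hg : Squarefree g := h₁.squarefree_of_dvd (Nat.gcd_dvd_left _ _)
  have hωcast (f : ℕ) (hf : Squarefree f) : (ω f : ℚ) = ∏ p ∈ f.primeFactors, (ω p : ℚ) := by
    exact_mod_cast hmul f hf
  have hgcast : (g : ℚ) = ∏ p ∈ g.primeFactors, (p : ℚ) := by
    rw [← Nat.cast_prod, Nat.prod_primeFactors_of_squarefree hg]
  calc (g : ℚ) / ω g = ∏ p ∈ g.primeFactors, (1 + ((p : ℚ) - ω p) / ω p) := by
        rw [hgcast, hωcast g hg, ← prod_div_distrib]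
        refine prod_congr rfl fun p hpg => ?_
        have : (ω p : ℚ) ≠ 0 := by
          exact_mod_cast (hp p (Nat.prime_of_mem_primeFactors hpg)).1.ne'
        field_simp
        ring
    _ = ∑ f ∈ g.divisors, ∏ p ∈ f.primeFactors, ((p : ℚ) - ω p) / ω p :=
        (Nat.sum_divisors_prod_primeFactors_of_squarefree _ hg).symm
    _ = _ := sum_congr rfl fun f hf => by
        rw [hωcast f (hg.squarefree_of_dvd (Nat.dvd_of_mem_divisors hf)), one_div_mul_eq_div,
          prod_div_distrib]

theorem omega_gcd_moebius_inversion (ω : ℕ → ℕ)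
    (hmul : ∀ d : ℕ, Squarefree d → ω d = ∏ p ∈ d.primeFactors, ω p)
    (hp : ∀ p : ℕ, p.Prime → 0 < ω p ∧ ω p < p)
    (d₁ d₂ : ℕ) (h₁ : Squarefree d₁) (h₂ : Squarefree d₂) :
    (Nat.gcd d₁ d₂ : ℚ) / (ω (Nat.gcd d₁ d₂) : ℚ) =
      ∑ f ∈ (Nat.gcd d₁ d₂).divisors,
        (1 / (ω f : ℚ)) * ∏ p ∈ f.primeFactors, ((p : ℚ) - (ω p : ℚ)) :=
  omega_gcd_moebius_inversion_general ω hmul hp d₁ d₂ h₁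
end

section
/- The optimal Selberg sieve weights λ(d) = (μ(d)/G(z,Ω)) · ∏_{p ∣ d} (p/(p − |Ω(p)|)) · ∑_{g < z/d, gcd(d,g)=1} μ(g)² H(g, Ω) satisfy |λ(d)| ≤ 1 for all squarefree d < z, and λ(1) = 1. -/
/-!
Write `h p = |Ω(p)| / (p - |Ω(p)|)` and `H` for the multiplicative function `∏_{p ∣ q} h p`.
For squarefree `d`, `∏_{p ∣ d} p / (p - |Ω(p)|) = ∏_{p ∣ d} (1 + h p) = ∑_{e ∣ d} H e`, so
`|λ(d)| · G` is the sum of `μ(e g)² H(e g)` over `e ∣ d` and `g` coprime to `d` with `d g < z`.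
Since `e = gcd(e g, d)`, the products `e g` are distinct and below `z`, so this is a sub-sum of `G`.
-/

open Finset ArithmeticFunction
open scoped ArithmeticFunction.Moebius

theorem ArithmeticFunction.prodPrimeFactors_nonneg {R : Type*} [CommSemiring R] [PartialOrder R]
    [IsOrderedRing R] {h : ℕ → R} (hh : ∀ p, p.Prime → 0 ≤ h p) (n : ℕ) :
    0 ≤ prodPrimeFactors h n := by
  rcases eq_or_ne n 0 with rfl | hn
  · simp
  · rw [prodPrimeFactors_apply hn]
    exact prod_nonneg fun p hp => hh p (Nat.prime_of_mem_primeFactors hp)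

theorem prod_primeFactors_div_sub_eq_sum_divisors {K : Type*} [Field K] {ω : ℕ → K}
    (hω : ∀ p : ℕ, p.Prime → (p : K) - ω p ≠ 0) {d : ℕ} (hd : Squarefree d) :
    ∏ p ∈ d.primeFactors, (p : K) / ((p : K) - ω p) =
      ∑ e ∈ d.divisors, prodPrimeFactors (fun p => ω p / ((p : K) - ω p)) e := by
  rw [← (IsMultiplicative.prodPrimeFactors _).prodPrimeFactors_one_add_of_squarefree hd]
  refine prod_congr rfl fun p hp => ?_
  have hpp := Nat.prime_of_mem_primeFactors hp
  have hne := hω p hpp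
  rw [prodPrimeFactors_apply hpp.ne_zero, hpp.primeFactors, prod_singleton]
  field_simp
  ring

theorem one_le_sum_range_moebius_sq_mul {f : ArithmeticFunction ℝ} (hf : f.IsMultiplicative)
    (hf0 : ∀ n, 0 ≤ f n) {z : ℕ} (hz : 1 < z) :
    1 ≤ ∑ q ∈ range z, (μ q : ℝ) ^ 2 * f q := by
  have := single_le_sum (fun q _ => mul_nonneg (sq_nonneg (μ q : ℝ)) (hf0 q)) (mem_range.mpr hz)
  simpa [hf.map_one] using this

theorem Nat.injOn_mul_of_dvd_of_coprime {d : ℕ} (hd : d ≠ 0) :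
    Set.InjOn (fun x : ℕ × ℕ => x.1 * x.2) {x | x.1 ∣ d ∧ d.Coprime x.2} := by
  have gcd_eq : ∀ x ∈ {x : ℕ × ℕ | x.1 ∣ d ∧ d.Coprime x.2}, (x.1 * x.2).gcd d = x.1 :=
    fun x ⟨hdvd, hcop⟩ => by rw [hcop.symm.gcd_mul_right_cancel, Nat.gcd_eq_left hdvd]
  intro x hx y hy (hxy : x.1 * x.2 = y.1 * y.2)
  have h1 : x.1 = y.1 := by rw [← gcd_eq x hx, ← gcd_eq y hy]; exact congrArg (Nat.gcd · d) hxy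
  have hx0 : x.1 ≠ 0 := ne_zero_of_dvd_ne_zero hd hx.1
  exact Prod.ext h1 (Nat.eq_of_mul_eq_mul_left (Nat.pos_of_ne_zero hx0) (by rwa [← h1] at hxy))

theorem sum_divisors_product_le_sum_range {M : Type*} [AddCommMonoid M] [PartialOrder M]
    [IsOrderedAddMonoid M] {F : ℕ → M} (hF : ∀ q, 0 ≤ F q) {d z : ℕ} (hd : d ≠ 0) (T : Finset ℕ)
    (hT : ∀ g ∈ T, d * g < z ∧ d.Coprime g) :
    ∑ x ∈ d.divisors ×ˢ T, F (x.1 * x.2) ≤ ∑ q ∈ range z, F q := by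
  have hinj : Set.InjOn (fun x : ℕ × ℕ => x.1 * x.2) (d.divisors ×ˢ T : Finset _) :=
    (Nat.injOn_mul_of_dvd_of_coprime hd).mono fun x hx => by
      obtain ⟨he, hg⟩ := Finset.mem_product.mp hx
      exact ⟨Nat.dvd_of_mem_divisors he, (hT _ hg).2⟩
  rw [← sum_image hinj]
  refine sum_le_sum_of_subset_of_nonneg (fun q hq => ?_) fun q _ _ => hF q
  obtain ⟨⟨e, g⟩, hx, rfl⟩ := mem_image.mp hq
  obtain ⟨he, hg⟩ := Finset.mem_product.mp hx
  have hle : e * g ≤ d * g := Nat.mul_le_mul_right _ (Nat.divisor_le he)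
  exact mem_range.mpr (hle.trans_lt (hT g hg).1)

theorem sum_divisors_mul_sum_coprime_le {f : ArithmeticFunction ℝ} (hf : f.IsMultiplicative)
    (hf0 : ∀ n, 0 ≤ f n) {d : ℕ} (hd : Squarefree d) (z : ℕ) :
    (∑ e ∈ d.divisors, f e) *
        ∑ g ∈ (range z).filter (fun g => d * g < z ∧ d.Coprime g), (μ g : ℝ) ^ 2 * f g ≤
      ∑ q ∈ range z, (μ q : ℝ) ^ 2 * f q := by
  set T := (range z).filter (fun g => d * g < z ∧ d.Coprime g)
  have hT : ∀ g ∈ T, d * g < z ∧ d.Coprime g := fun g hg => (mem_filter.mp hg).2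
  have hterm : ∀ x ∈ d.divisors ×ˢ T,
      f x.1 * ((μ x.2 : ℝ) ^ 2 * f x.2) = (μ (x.1 * x.2) : ℝ) ^ 2 * f (x.1 * x.2) := by
    rintro ⟨e, g⟩ hx
    obtain ⟨he, hg⟩ := Finset.mem_product.mp hx
    have hed : e ∣ d := Nat.dvd_of_mem_divisors he
    have hcop : e.Coprime g := Nat.Coprime.coprime_dvd_left hed (hT g hg).2
    have hμe : (μ e : ℝ) ^ 2 = 1 := by
      exact_mod_cast moebius_sq_eq_one_of_squarefree (hd.squarefree_of_dvd hed)
    simp only [isMultiplicative_moebius.map_mul_of_coprime hcop, hf.map_mul_of_coprime hcop,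
      Int.cast_mul, mul_pow, hμe]
    ring
  rw [sum_mul_sum, ← sum_product' d.divisors T (fun e g => f e * ((μ g : ℝ) ^ 2 * f g)),
    sum_congr rfl hterm]
  exact sum_divisors_product_le_sum_range (fun q => mul_nonneg (sq_nonneg (μ q : ℝ)) (hf0 q))
    hd.ne_zero T hT

open scoped Classical in
theorem selberg_weights_bounded (z : ℕ) (hz : 1 < z) (w : ℕ → ℕ)
    (hp : ∀ p : ℕ, p.Prime → 0 < w p ∧ w p < p)
    (H : ℕ → ℝ)
    (hH : ∀ q : ℕ, H q = ∏ p ∈ q.primeFactors, (w p : ℝ) / ((p : ℝ) - w p))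
    (G : ℝ)
    (hG : G = ∑ q ∈ Finset.range z, (ArithmeticFunction.moebius q : ℝ) ^ 2 * H q)
    (lam : ℕ → ℝ)
    (hlam : ∀ d : ℕ, lam d = (ArithmeticFunction.moebius d : ℝ) / G *
      (∏ p ∈ d.primeFactors, (p : ℝ) / ((p : ℝ) - w p)) *
      ∑ g ∈ (Finset.range z).filter (fun g => d * g < z ∧ Nat.Coprime d g),
        (ArithmeticFunction.moebius g : ℝ) ^ 2 * H g) :
    lam 1 = 1 ∧ ∀ d : ℕ, Squarefree d → d < z → |lam d| ≤ 1 := by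
  set f := prodPrimeFactors fun p => (w p : ℝ) / ((p : ℝ) - w p)
  have hf : f.IsMultiplicative := IsMultiplicative.prodPrimeFactors _
  have hpw : ∀ p : ℕ, p.Prime → 0 < (p : ℝ) - w p := fun p hp' =>
    sub_pos.mpr (by exact_mod_cast (hp p hp').2)
  have hf0 : ∀ n, 0 ≤ f n :=
    prodPrimeFactors_nonneg fun p hp' => div_nonneg (Nat.cast_nonneg _) (hpw p hp').le
  -- `H 0 = 1` while `f 0 = 0`, but `μ 0 = 0` hides the difference.
  have hHf : ∀ q, (μ q : ℝ) ^ 2 * H q = (μ q : ℝ) ^ 2 * f q := by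
    rintro (_ | q)
    · simp
    · rw [hH, prodPrimeFactors_apply q.succ_ne_zero]
  simp_rw [hHf] at hG hlam
  have hGpos : 0 < G := hG ▸ one_pos.trans_le (one_le_sum_range_moebius_sq_mul hf hf0 hz)
  refine ⟨?_, fun d hd _ => ?_⟩
  · have hfilter : (range z).filter (fun g => 1 * g < z ∧ Nat.Coprime 1 g) = range z :=
      filter_true_of_mem fun g hg => ⟨by simpa using mem_range.mp hg, Nat.coprime_one_left g⟩
    rw [hlam 1, hfilter, ← hG]
    simp [hGpos.ne']
  · have hnonneg : 0 ≤ (∑ e ∈ d.divisors, f e) *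
        ∑ g ∈ (range z).filter (fun g => d * g < z ∧ d.Coprime g), (μ g : ℝ) ^ 2 * f g :=
      mul_nonneg (sum_nonneg fun e _ => hf0 e)
        (sum_nonneg fun g _ => mul_nonneg (sq_nonneg _) (hf0 g))
    have hμ : |(μ d : ℝ)| ≤ 1 := by exact_mod_cast abs_moebius_le_one
    rw [hlam d, prod_primeFactors_div_sub_eq_sum_divisors (fun p hp' => (hpw p hp').ne') hd,
      mul_assoc, abs_mul, abs_div, abs_of_pos hGpos, abs_of_nonneg hnonneg,
      div_mul_eq_mul_div, div_le_one hGpos, hG]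
    exact (mul_le_of_le_one_left hnonneg hμ).trans (sum_divisors_mul_sum_coprime_le hf hf0 hd z)
end

section
/- Selberg's inequality in a Hilbert space: for any finite family (ψ_m) of nonzero vectors and any vector ψ in an inner product space over ℂ, ∑_m |⟨ψ, ψ_m⟩|² / (∑_n |⟨ψ_m, ψ_n⟩|) ≤ ⟨ψ, ψ⟩. -/
open Finset RCLike
open scoped ComplexConjugate

/-!
Write `D m = ∑ n ‖⟪Ψ m, Ψ n⟫‖` and `S` for the left-hand side. By the Schur test (AM-GM on
`‖c m‖ ‖c n‖` and the symmetry of `‖⟪Ψ m, Ψ n⟫‖`), `‖∑ c m • Ψ m‖² ≤ ∑ ‖c m‖² D m` for all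
coefficients `c`. Dually, for `c m = conj ⟪ψ, Ψ m⟫ / D m` and `v = ∑ c m • Ψ m` one has
`re ⟪ψ, v⟫ = S` and `‖v‖² ≤ S`, so `0 ≤ ‖ψ - v‖² ≤ ‖ψ‖² - S`.
-/

section

variable {ι : Type*} [Fintype ι]

theorem sum_sum_mul_mul_le_of_symm (x : ι → ℝ) {a : ι → ι → ℝ}
    (ha : ∀ m n, 0 ≤ a m n) (hsymm : ∀ m n, a m n = a n m) :
    ∑ m, ∑ n, x m * x n * a m n ≤ ∑ m, x m ^ 2 * ∑ n, a m n := by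
  have hswap : ∑ m, ∑ n, x n ^ 2 * a m n = ∑ m, ∑ n, x m ^ 2 * a m n := by
    rw [Finset.sum_comm]
    simp_rw [hsymm]
  calc ∑ m, ∑ n, x m * x n * a m n
      ≤ ∑ m, ∑ n, (x m ^ 2 + x n ^ 2) / 2 * a m n := by
        gcongr with m _ n _
        · exact ha m n
        · nlinarith [sq_nonneg (x m - x n)]
    _ = (∑ m, ∑ n, x m ^ 2 * a m n + ∑ m, ∑ n, x n ^ 2 * a m n) / 2 := by
        simp only [add_div, add_mul, Finset.sum_add_distrib, Finset.sum_div, div_mul_eq_mul_div]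
    _ = ∑ m, x m ^ 2 * ∑ n, a m n := by
        rw [hswap, add_self_div_two]
        simp only [Finset.mul_sum]

variable {𝕜 E : Type*} [RCLike 𝕜] [NormedAddCommGroup E] [InnerProductSpace 𝕜 E]

local notation "⟪" x ", " y "⟫" => inner 𝕜 x y

theorem inner_sum_smul_sum_smul_self (c : ι → 𝕜) (Ψ : ι → E) :
    ⟪∑ m, c m • Ψ m, ∑ n, c n • Ψ n⟫ = ∑ m, ∑ n, conj (c m) * c n * ⟪Ψ m, Ψ n⟫ := by
  simp only [inner_sum, sum_inner, inner_smul_left, inner_smul_right, Finset.mul_sum]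
  rw [Finset.sum_comm]
  exact Finset.sum_congr rfl fun m _ => Finset.sum_congr rfl fun n _ => by ring

theorem norm_sum_smul_sq_le (c : ι → 𝕜) (Ψ : ι → E) :
    ‖∑ m, c m • Ψ m‖ ^ 2 ≤ ∑ m, ‖c m‖ ^ 2 * ∑ n, ‖⟪Ψ m, Ψ n⟫‖ := by
  calc ‖∑ m, c m • Ψ m‖ ^ 2
      = re (∑ m, ∑ n, conj (c m) * c n * ⟪Ψ m, Ψ n⟫) := by
        rw [← inner_sum_smul_sum_smul_self, inner_self_eq_norm_sq]
    _ ≤ ∑ m, ∑ n, ‖c m‖ * ‖c n‖ * ‖⟪Ψ m, Ψ n⟫‖ := by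
        simp only [map_sum]
        gcongr with m _ n _
        refine (re_le_norm _).trans_eq ?_
        simp only [norm_mul, norm_conj]
    _ ≤ ∑ m, ‖c m‖ ^ 2 * ∑ n, ‖⟪Ψ m, Ψ n⟫‖ :=
        sum_sum_mul_mul_le_of_symm _ (fun _ _ => norm_nonneg _) fun _ _ => norm_inner_symm _ _

theorem sum_norm_inner_sq_div_le_norm_sq {D : ι → ℝ} (hD : ∀ m, 0 ≤ D m) (ψ : E) (Ψ : ι → E)
    (h : ∀ c : ι → 𝕜, ‖∑ m, c m • Ψ m‖ ^ 2 ≤ ∑ m, ‖c m‖ ^ 2 * D m) :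
    ∑ m, ‖⟪ψ, Ψ m⟫‖ ^ 2 / D m ≤ ‖ψ‖ ^ 2 := by
  set c : ι → 𝕜 := fun m => ((D m)⁻¹ : 𝕜) * conj ⟪ψ, Ψ m⟫
  set S := ∑ m, ‖⟪ψ, Ψ m⟫‖ ^ 2 / D m
  have hre : re ⟪ψ, ∑ m, c m • Ψ m⟫ = S := by
    simp only [inner_sum, inner_smul_right, map_sum, c, S]
    refine Finset.sum_congr rfl fun m _ => ?_
    rw [mul_assoc, RCLike.conj_mul, ← ofReal_inv, ← ofReal_pow, ← ofReal_mul, ofReal_re]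
    ring
  have hcoef : ∑ m, ‖c m‖ ^ 2 * D m = S := by
    refine Finset.sum_congr rfl fun m _ => ?_
    rw [norm_mul, norm_conj, ← ofReal_inv, norm_ofReal, abs_inv, abs_of_nonneg (hD m)]
    -- `D m = 0` is harmless: both sides are then `0` by the convention `0⁻¹ = 0`.
    rcases (hD m).eq_or_lt with h0 | hpos
    · simp [← h0]
    · field_simp
  have hexpand := norm_sub_sq (𝕜 := 𝕜) ψ (∑ m, c m • Ψ m)
  rw [hre] at hexpand
  linarith [hcoef ▸ h c, sq_nonneg ‖ψ - ∑ m, c m • Ψ m‖]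

end

theorem selberg_hilbert_inequality_general {H : Type*} [NormedAddCommGroup H]
    [InnerProductSpace ℂ H] {I : Type*} [Fintype I]
    (ψ : H) (Ψ : I → H) :
    ∑ m : I, ‖(inner ℂ ψ (Ψ m) : ℂ)‖ ^ 2 / ∑ n : I, ‖(inner ℂ (Ψ m) (Ψ n) : ℂ)‖ ≤
      ‖ψ‖ ^ 2 :=
  sum_norm_inner_sq_div_le_norm_sq (fun _ => sum_nonneg fun _ _ => norm_nonneg _) ψ Ψ
    fun c => norm_sum_smul_sq_le c Ψ

theorem selberg_hilbert_inequality {H : Type*} [NormedAddCommGroup H]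
    [InnerProductSpace ℂ H] {I : Type*} [Fintype I]
    (ψ : H) (Ψ : I → H)
    (hΨ : ∀ m : I, 0 < ∑ n : I, ‖(inner ℂ (Ψ m) (Ψ n) : ℂ)‖) :
    ∑ m : I, ‖(inner ℂ ψ (Ψ m) : ℂ)‖ ^ 2 / ∑ n : I, ‖(inner ℂ (Ψ m) (Ψ n) : ℂ)‖ ≤
      ‖ψ‖ ^ 2 :=
  selberg_hilbert_inequality_general ψ Ψ
end
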